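/- arXiv:2308.11564 — 3 statements merged into one kernel-verified Lean document; each statement's English description precedes it below -/
import Mathlib

section
/- Let c > 0 and let a, b ≥ 0 be real numbers with a² ≤ c·b. Then (1/2)·cosh(a/c) ≤ ((1/2)·cosh(b/c))^{1/2}. -/
/-- One-step θ-contraction estimate: if `c > 0`, `a, b ≥ 0` and `a² ≤ c·b`, then
`(1/2)·cosh(a/c) ≤ ((1/2)·cosh(b/c))^(1/2)`. -/
theorem half_cosh_le_rpow_half
    (c a b : ℝ) (hc : 0 < c) (ha : 0 ≤ a) (hb : 0 ≤ b) (h : a ^ 2 ≤ c * b) :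
    (1 / 2) * Real.cosh (a / c) ≤ ((1 / 2) * Real.cosh (b / c)) ^ ((1 : ℝ) / 2) := by
  set x := a / c with hx
  set y := b / c with hy
  have hxy : x ^ 2 ≤ y := by
    rw [hx, hy, div_pow]
    rw [div_le_div_iff₀ (by positivity) hc]
    calc a ^ 2 * c ≤ (c * b) * c := by nlinarith
      _ = b * c ^ 2 := by ring
  have h1 : Real.cosh x ≤ Real.exp (x ^ 2 / 2) := Real.cosh_le_exp_half_sq x
  have h2 : Real.exp y / 2 ≤ Real.cosh y := by
    rw [Real.cosh_eq]
    have := (Real.exp_pos (-y)).le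
    linarith
  have hK : ((1 / 2) * Real.cosh x) ^ 2 ≤ (1 / 2) * Real.cosh y := by
    have h3 : Real.cosh x ^ 2 ≤ Real.exp (x ^ 2) := by
      calc Real.cosh x ^ 2 ≤ Real.exp (x ^ 2 / 2) ^ 2 := by
            have := (Real.cosh_pos (x := x)).le
            nlinarith
        _ = Real.exp (x ^ 2) := by
            rw [← Real.exp_nat_mul]; ring_nf
    have h4 : Real.exp (x ^ 2) ≤ Real.exp y := Real.exp_le_exp.2 hxy
    nlinarith
  have hpos : (0 : ℝ) ≤ (1 / 2) * Real.cosh x := by positivity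
  have := Real.rpow_le_rpow (by positivity) hK (by norm_num : (0:ℝ) ≤ 1 / 2)
  rwa [← Real.rpow_natCast ((1 / 2) * Real.cosh x) 2, ← Real.rpow_mul hpos,
    (by norm_num : ((2 : ℕ) : ℝ) * (1 / 2) = 1), Real.rpow_one] at this
end

section
/- Let (X, d) be a metric space, let T : X → X, and let c > 0 be such that d(T x, T y)² ≤ c · d(x, y) for all x, y ∈ X. Then for every k ∈ ℕ and all x, y ∈ X, (1/2)·cosh(d(T^[k] x, T^[k] y) / c) ≤ ((1/2)·cosh(d(x, y) / c))^{(1/2)^k}, where T^[k] denotes the k-fold iterate of T. -/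
open Real

lemma half_cosh_step {t s : ℝ} (ht : 0 ≤ t) (h : t ^ 2 ≤ s) :
    (1 / 2) * Real.cosh t ≤ ((1 / 2) * Real.cosh s) ^ ((1 : ℝ) / 2) := by
  have hb : (0:ℝ) ≤ (1 / 2) * Real.cosh s := by positivity
  rw [← Real.sqrt_eq_rpow]
  rw [Real.le_sqrt (by positivity) hb]
  have h1 : Real.cosh t ≤ Real.exp (t ^ 2 / 2) := Real.cosh_le_exp_half_sq t
  have h2 : ((1 / 2) * Real.cosh t) ^ 2 ≤ Real.exp (t ^ 2) / 4 := by
    have := mul_self_le_mul_self (by positivity : (0:ℝ) ≤ Real.cosh t) h1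
    rw [← Real.exp_add] at this
    have : Real.cosh t ^ 2 ≤ Real.exp (t ^ 2) := by
      calc Real.cosh t ^ 2 ≤ Real.exp (t ^ 2 / 2) ^ 2 := by
              apply pow_le_pow_left₀ (by positivity) h1
           _ = Real.exp (t ^ 2) := by
              rw [← Real.exp_nat_mul]; ring_nf
    nlinarith
  have h3 : Real.exp (t ^ 2) ≤ Real.exp s := Real.exp_le_exp.2 h
  have h4 : Real.exp s ≤ 2 * Real.cosh s := by
    rw [Real.cosh_eq]
    have := (Real.exp_pos (-s)).le
    linarith
  nlinarith

/-- Iterated θ-contraction estimate: if `d(Tx, Ty)² ≤ c·d(x, y)` for all `x, y`, then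
for every `k` and all `x, y`,
`(1/2)·cosh(d(T^[k] x, T^[k] y)/c) ≤ ((1/2)·cosh(d(x, y)/c))^((1/2)^k)`. -/
theorem half_cosh_iterate_le
    {X : Type*} [MetricSpace X] (T : X → X) (c : ℝ) (hc : 0 < c)
    (hT : ∀ x y : X, dist (T x) (T y) ^ 2 ≤ c * dist x y) :
    ∀ (k : ℕ) (x y : X),
      (1 / 2) * Real.cosh (dist (T^[k] x) (T^[k] y) / c) ≤
        ((1 / 2) * Real.cosh (dist x y / c)) ^ (((1 : ℝ) / 2) ^ k) := by
  have step : ∀ x y : X,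
      (1 / 2) * Real.cosh (dist (T x) (T y) / c) ≤
        ((1 / 2) * Real.cosh (dist x y / c)) ^ ((1 : ℝ) / 2) := by
    intro x y
    apply half_cosh_step (by positivity)
    rw [div_pow, div_le_div_iff₀ (by positivity) hc]
    nlinarith [hT x y, hc.le, mul_le_mul_of_nonneg_right (hT x y) hc.le]
  intro k
  induction k with
  | zero => intro x y; simp
  | succ k ih =>
    intro x y
    have h1 := ih (T x) (T y)
    rw [← Function.iterate_succ_apply, ← Function.iterate_succ_apply] at h1
    refine h1.trans ?_
    have hb : (0:ℝ) ≤ (1 / 2) * Real.cosh (dist x y / c) := by positivity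
    calc ((1 / 2) * Real.cosh (dist (T x) (T y) / c)) ^ (((1:ℝ) / 2) ^ k)
        ≤ (((1 / 2) * Real.cosh (dist x y / c)) ^ ((1:ℝ) / 2)) ^ (((1:ℝ) / 2) ^ k) := by
          apply Real.rpow_le_rpow (by positivity) (step x y) (by positivity)
      _ = ((1 / 2) * Real.cosh (dist x y / c)) ^ (((1:ℝ) / 2) ^ (k + 1)) := by
          rw [← Real.rpow_mul hb, ← pow_succ']
end

section
/- Let T > 0, a ≥ 0, k ≥ 0, and let u : [0, T] → ℝ be a continuous nonnegative function satisfying u(t) ≤ a + k·∫₀ᵗ (u(s) + √(u(s))) ds for all t ∈ [0, T]. Then u(t) ≤ ((√a + 1)·e^{k t / 2} − 1)² for all t ∈ [0, T]. -/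
open Real Set MeasureTheory intervalIntegral Filter

/-- Bihari-type nonlinear Gronwall inequality for `g(s) = s + √s`: if `u` is continuous
and nonnegative on `[0, T]` and satisfies `u(t) ≤ a + k ∫₀ᵗ (u(s) + √(u(s))) ds` there,
then `u(t) ≤ ((√a + 1) e^{kt/2} − 1)²` on `[0, T]`. -/
theorem bihari_sqrt_gronwall
    (T a k : ℝ) (hT : 0 < T) (ha : 0 ≤ a) (hk : 0 ≤ k)
    (u : ℝ → ℝ) (hu_cont : ContinuousOn u (Set.Icc 0 T))
    (hu_nonneg : ∀ t ∈ Set.Icc (0 : ℝ) T, 0 ≤ u t)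
    (hu_le : ∀ t ∈ Set.Icc (0 : ℝ) T,
      u t ≤ a + k * ∫ s in (0 : ℝ)..t, (u s + Real.sqrt (u s))) :
    ∀ t ∈ Set.Icc (0 : ℝ) T,
      u t ≤ ((Real.sqrt a + 1) * Real.exp (k * t / 2) - 1) ^ 2 := by
  set F : ℝ → ℝ := fun s => u s + Real.sqrt (u s) with hF
  have hF_cont : ContinuousOn F (Icc 0 T) := hu_cont.add (hu_cont.sqrt)
  have hF_nonneg : ∀ s ∈ Icc (0:ℝ) T, 0 ≤ F s := fun s hs =>
    add_nonneg (hu_nonneg s hs) (Real.sqrt_nonneg _)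
  set w : ℝ → ℝ := fun t => a + k * ∫ s in (0:ℝ)..t, F s with hw
  have hsub : ∀ t ∈ Icc (0:ℝ) T, uIcc (0:ℝ) t ⊆ Icc 0 T := by
    intro t ht
    rw [uIcc_of_le ht.1]
    exact Icc_subset_Icc le_rfl ht.2
  have hF_int : ∀ t ∈ Icc (0:ℝ) T, IntervalIntegrable F volume 0 t := fun t ht =>
    (hF_cont.mono (hsub t ht)).intervalIntegrable
  have hw_cont : ContinuousOn w (Icc 0 T) := by
    apply continuousOn_const.add (continuousOn_const.mul _)
    have := intervalIntegral.continuousOn_primitive_interval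
      (f := F) (μ := volume) (a := (0:ℝ)) (b := T)
      (by rw [uIcc_of_le hT.le]; exact hF_cont.integrableOn_compact isCompact_Icc)
    rwa [uIcc_of_le hT.le] at this
  have hu_le_w : ∀ t ∈ Icc (0:ℝ) T, u t ≤ w t := hu_le
  have hw_nonneg : ∀ t ∈ Icc (0:ℝ) T, 0 ≤ w t := by
    intro t ht
    have : 0 ≤ ∫ s in (0:ℝ)..t, F s := by
      apply intervalIntegral.integral_nonneg ht.1
      intro s hs
      exact hF_nonneg s ⟨hs.1, hs.2.trans ht.2⟩
    exact add_nonneg ha (mul_nonneg hk this)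
  -- step: for every ε > 0 the bound with a+ε
  have key : ∀ ε > 0, ∀ t ∈ Icc (0:ℝ) T,
      u t ≤ ((Real.sqrt (a + ε) + 1) * Real.exp (k * t / 2) - 1) ^ 2 := by
    intro ε hε t ht
    set h : ℝ → ℝ := fun t => (Real.sqrt (w t + ε) + 1) * Real.exp (-(k * t / 2)) with hh
    have hwpos : ∀ x ∈ Icc (0:ℝ) T, 0 < w x + ε := fun x hx =>
      add_pos_of_nonneg_of_pos (hw_nonneg x hx) hε
    have hh_cont : ContinuousOn h (Icc 0 T) := by
      apply ContinuousOn.mul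
      · exact ((hw_cont.add continuousOn_const).sqrt).add continuousOn_const
      · exact (Real.continuous_exp.comp (((continuous_const.mul continuous_id).div_const 2).neg)).continuousOn
    -- derivative of h at interior points
    have hderiv : ∀ x ∈ Ioo (0:ℝ) T, HasDerivAt h
        ((1 / (2 * Real.sqrt (w x + ε)) * (k * F x)) * Real.exp (-(k * x / 2))
          + (Real.sqrt (w x + ε) + 1) * (Real.exp (-(k * x / 2)) * (-(k / 2)))) x := by
      intro x hx
      have hxI : x ∈ Icc (0:ℝ) T := Ioo_subset_Icc_self hx
      have hmem : Icc (0:ℝ) T ∈ nhds x := Icc_mem_nhds hx.1 hx.2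
      have hFx : ContinuousAt F x := (hF_cont x hxI).continuousAt hmem
      have hw' : HasDerivAt w (k * F x) x := by
        have h1 : HasDerivAt (fun t => ∫ s in (0:ℝ)..t, F s) (F x) x :=
          intervalIntegral.integral_hasDerivAt_right (hF_int x hxI)
            ⟨Icc 0 T, hmem, hF_cont.aestronglyMeasurable measurableSet_Icc⟩ hFx
        exact (h1.const_mul k).const_add a
      have hs' : HasDerivAt (fun t => Real.sqrt (w t + ε))
          (1 / (2 * Real.sqrt (w x + ε)) * (k * F x)) x := by
        exact (Real.hasDerivAt_sqrt (ne_of_gt (hwpos x hxI))).comp x (hw'.add_const ε)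
      have he' : HasDerivAt (fun t => Real.exp (-(k * t / 2)))
          (Real.exp (-(k * x / 2)) * (-(k / 2))) x := by
        have : HasDerivAt (fun t : ℝ => -(k * t / 2)) (-(k / 2)) x := by
          have h2 := (((hasDerivAt_id x).const_mul k).div_const 2).neg
          simp only [mul_one] at h2
          exact h2
        simpa [mul_comm] using this.exp
      exact ((hs'.add_const 1).mul he')
    -- the derivative is nonpositive
    have hderiv_nonpos : ∀ x ∈ Ioo (0:ℝ) T, deriv h x ≤ 0 := by
      intro x hx
      have hxI : x ∈ Icc (0:ℝ) T := Ioo_subset_Icc_self hx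
      rw [(hderiv x hx).deriv]
      set S := Real.sqrt (w x + ε) with hS
      have hSpos : 0 < S := Real.sqrt_pos.2 (hwpos x hxI)
      have hepos : 0 < Real.exp (-(k * x / 2)) := Real.exp_pos _
      -- F x ≤ S * (S + 1)
      have hFle : F x ≤ S * (S + 1) := by
        have h1 : u x ≤ w x + ε := (hu_le_w x hxI).trans (by linarith)
        have h2 : Real.sqrt (u x) ≤ S := Real.sqrt_le_sqrt h1
        have h3 : w x + ε = S ^ 2 := (Real.sq_sqrt (hwpos x hxI).le).symm
        have : F x ≤ S ^ 2 + S := by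
          simp only [hF]
          exact add_le_add (h3 ▸ h1) h2
        nlinarith
      have hmain : 1 / (2 * S) * (k * F x) ≤ (S + 1) * (k / 2) := by
        rw [div_mul_eq_mul_div, one_mul, div_le_iff₀ (by positivity)]
        calc k * F x ≤ k * (S * (S + 1)) := mul_le_mul_of_nonneg_left hFle hk
          _ = (S + 1) * (k / 2) * (2 * S) := by ring
      have : 1 / (2 * S) * (k * F x) * Real.exp (-(k * x / 2))
          ≤ (S + 1) * (k / 2) * Real.exp (-(k * x / 2)) :=
        mul_le_mul_of_nonneg_right hmain hepos.le
      nlinarith [this]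
    -- h is antitone on [0, T]
    have hanti : AntitoneOn h (Icc 0 T) := by
      apply antitoneOn_of_deriv_nonpos (convex_Icc 0 T) hh_cont
      · intro x hx
        rw [interior_Icc] at hx
        exact (hderiv x hx).differentiableAt.differentiableWithinAt
      · intro x hx
        rw [interior_Icc] at hx
        exact hderiv_nonpos x hx
    have h0 : h 0 = Real.sqrt (a + ε) + 1 := by
      simp [hh, hw]
    have hht : h t ≤ Real.sqrt (a + ε) + 1 := by
      rw [← h0]
      exact hanti (left_mem_Icc.2 hT.le) ht ht.1
    -- unfold
    have hexp : (0:ℝ) < Real.exp (k * t / 2) := Real.exp_pos _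
    have hsqle : Real.sqrt (w t + ε) + 1 ≤ (Real.sqrt (a + ε) + 1) * Real.exp (k * t / 2) := by
      have h1 : Real.exp (-(k * t / 2)) * Real.exp (k * t / 2) = 1 := by
        rw [← Real.exp_add]; simp
      calc Real.sqrt (w t + ε) + 1
          = (Real.sqrt (w t + ε) + 1) * Real.exp (-(k * t / 2)) * Real.exp (k * t / 2) := by
            rw [mul_assoc, h1, mul_one]
        _ ≤ (Real.sqrt (a + ε) + 1) * Real.exp (k * t / 2) :=
            mul_le_mul_of_nonneg_right hht hexp.le
    have hB1 : Real.sqrt (w t + ε) ≤ (Real.sqrt (a + ε) + 1) * Real.exp (k * t / 2) - 1 := by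
      linarith
    have hwt : w t + ε ≤ ((Real.sqrt (a + ε) + 1) * Real.exp (k * t / 2) - 1) ^ 2 := by
      have h3 : w t + ε = Real.sqrt (w t + ε) ^ 2 := (Real.sq_sqrt (hwpos t ht).le).symm
      rw [h3]
      exact pow_le_pow_left₀ (Real.sqrt_nonneg _) hB1 2
    have h5 : w t ≤ w t + ε := by linarith
    exact ((hu_le_w t ht).trans h5).trans hwt
  -- pass to the limit ε → 0⁺
  intro t ht
  have htend : Tendsto (fun ε : ℝ => ((Real.sqrt (a + ε) + 1) * Real.exp (k * t / 2) - 1) ^ 2)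
      (nhdsWithin 0 (Ioi 0)) (nhds (((Real.sqrt a + 1) * Real.exp (k * t / 2) - 1) ^ 2)) := by
    have hc : Continuous (fun ε : ℝ => ((Real.sqrt (a + ε) + 1) * Real.exp (k * t / 2) - 1) ^ 2) := by
      have h1 : Continuous fun ε : ℝ => a + ε := continuous_const.add continuous_id
      exact ((((Real.continuous_sqrt.comp h1).add continuous_const).mul
        continuous_const).sub continuous_const).pow 2
    have := hc.tendsto 0
    simp only [add_zero] at this
    exact this.mono_left nhdsWithin_le_nhds
  refine ge_of_tendsto htend ?_
  filter_upwards [self_mem_nhdsWithin] with ε hε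
  exact key ε hε t ht
end
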